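/- arXiv:2011.14532 — 2 statements merged into one kernel-verified Lean document; each statement's English description precedes it below -/
import Mathlib

section
/- For all t > 0, exp(−t²/20) ≤ t·e^{t/2}/(e^t − 1) ≤ 1. -/
/-! With `s = t / 2` the middle term is `s / sinh s`, so the upper bound is `s ≤ sinh s`. For the
lower bound, compare `sinh s / s = ∑ s ^ (2k) / (2k+1)!` termwise with
`exp (s ^ 2 / 6) = ∑ s ^ (2k) / (6 ^ k k!)`, using `6 ^ k k! ≤ (2k+1)!`; finally `t² / 24 ≤ t² / 20`. -/

open Real
open scoped Nat

theorem Nat.six_pow_mul_factorial_le_factorial_two_mul_add_one (k : ℕ) :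
    6 ^ k * k ! ≤ (2 * k + 1)! := by
  induction k with
  | zero => simp
  | succ k ih =>
    rw [show 2 * (k + 1) + 1 = 2 * k + 1 + 1 + 1 by ring, Nat.factorial_succ (2 * k + 1 + 1),
      Nat.factorial_succ (2 * k + 1), Nat.factorial_succ, pow_succ]
    calc 6 ^ k * 6 * ((k + 1) * k !) = 6 * (k + 1) * (6 ^ k * k !) := by ring
      _ ≤ (2 * k + 1 + 1 + 1) * (2 * k + 1 + 1) * (2 * k + 1)! :=
        Nat.mul_le_mul (by nlinarith) ih
      _ = _ := by ring

theorem Real.sinh_le_mul_exp_sq_div_six {x : ℝ} (hx : 0 ≤ x) : sinh x ≤ x * exp (x ^ 2 / 6) := by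
  rw [exp_eq_exp_ℝ]
  refine hasSum_le (fun k ↦ ?_) (hasSum_sinh x)
    ((NormedSpace.expSeries_div_hasSum_exp (x ^ 2 / 6)).mul_left x)
  rw [pow_succ', pow_mul, mul_div_assoc, div_pow, div_div]
  gcongr
  exact_mod_cast Nat.six_pow_mul_factorial_le_factorial_two_mul_add_one k

theorem Real.exp_neg_sq_div_six_le_div_sinh {x : ℝ} (hx : 0 < x) :
    exp (-(x ^ 2) / 6) ≤ x / sinh x := by
  rw [le_div_iff₀ (sinh_pos_iff.mpr hx), neg_div, exp_neg, ← div_eq_inv_mul,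
    div_le_iff₀ (exp_pos _)]
  exact sinh_le_mul_exp_sq_div_six hx.le

theorem Real.div_sinh_le_one {x : ℝ} (hx : 0 < x) : x / sinh x ≤ 1 :=
  (div_le_one (sinh_pos_iff.mpr hx)).mpr (self_le_sinh_iff.mpr hx.le)

theorem Real.mul_exp_half_div_exp_sub_one (t : ℝ) :
    t * exp (t / 2) / (exp t - 1) = t / 2 / sinh (t / 2) := by
  have hexp : exp t - 1 = 2 * exp (t / 2) * sinh (t / 2) := by
    rw [sinh_eq, exp_neg]
    field_simp
    rw [← exp_nat_mul]
    ring_nf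
  rw [hexp]
  field_simp

/-- For all t > 0, e^{−t²/20} ≤ t·e^{t/2}/(e^t − 1) ≤ 1. -/
theorem stmt16 (t : ℝ) (ht : 0 < t) :
    Real.exp (-t ^ 2 / 20) ≤ t * Real.exp (t / 2) / (Real.exp t - 1) ∧
      t * Real.exp (t / 2) / (Real.exp t - 1) ≤ 1 := by
  have hs : 0 < t / 2 := half_pos ht
  rw [mul_exp_half_div_exp_sub_one]
  refine ⟨le_trans ?_ (exp_neg_sq_div_six_le_div_sinh hs), div_sinh_le_one hs⟩
  rw [exp_le_exp]
  nlinarith [sq_nonneg t]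
end

section
/- Let p ∈ [0,1] and define the distribution D_{p,n} on strands of length n over {A,C,G,T} by: the first character is uniform; each subsequent character equals the previous one with probability p and otherwise is uniform on the other three characters. Let d(S) = |{i : S_i = S_{i+1}}|. Then for a uniformly random S (i.e. p = 1/4) and for S' distributed according to D_{1/4+δ,n} with 0 ≤ δ ≤ 1/10, for every strand S₀ with d(S₀) ≤ ⌈(1/4+δ)n⌉ one has P_{D_{1/4}}(S₀) ≥ (1/2)·e^{−8δ²n}·P_{D_{1/4+δ}}(S₀). -/
/-- Number of indices i with S_i = S_{i+1} (repetitions of the previous base). -/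
def reps (L : List (Fin 4)) : ℕ := (L.zip L.tail).countP (fun p => p.1 == p.2)

/-- D_{p,n}(S) = (1/4)·((1−p)/3)^{n−d(S)−1}·p^{d(S)}. -/
noncomputable def Dpn (p : ℝ) (n : ℕ) (L : List (Fin 4)) : ℝ :=
  (1 / 4) * ((1 - p) / 3) ^ (n - reps L - 1) * p ^ (reps L)

lemma exp_two_thirds_le_two : Real.exp (2/3) ≤ 2 := by
  have h3 : Real.exp (2/3) ^ (3:ℕ) = Real.exp 2 := by
    rw [← Real.exp_nat_mul]; norm_num
  have h2 : Real.exp 2 ≤ 8 := by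
    have := Real.exp_one_lt_d9
    have h : Real.exp 2 = Real.exp 1 * Real.exp 1 := by
      rw [← Real.exp_add]; norm_num
    nlinarith [Real.exp_pos 1]
  have hpos := Real.exp_pos (2/3 : ℝ)
  nlinarith [h3, h2, hpos, sq_nonneg (Real.exp (2/3)), sq_nonneg (Real.exp (2/3) - 2), sq_nonneg (Real.exp (2/3) + 2)]

/-- Likelihood ratio bound: for 0 ≤ δ ≤ 1/10 and any strand S₀ of length n with
d(S₀) ≤ ⌈(1/4+δ)n⌉, one has D_{1/4}(S₀) ≥ (1/2)·e^{−8δ²n}·D_{1/4+δ}(S₀). -/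
theorem stmt18 (n : ℕ) (hn : 1 ≤ n) (δ : ℝ) (h0 : 0 ≤ δ) (h1 : δ ≤ 1 / 10)
    (S₀ : List (Fin 4)) (hlen : S₀.length = n)
    (hd : reps S₀ ≤ ⌈((1 / 4 : ℝ) + δ) * n⌉₊) :
    (1 / 2) * Real.exp (-8 * δ ^ 2 * n) * Dpn (1 / 4 + δ) n S₀ ≤ Dpn (1 / 4) n S₀ := by
  set d := reps S₀ with hdd
  have hd1 : d ≤ n - 1 := by
    have hc := List.countP_le_length (p := fun p : Fin 4 × Fin 4 => p.1 == p.2)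
      (l := S₀.zip S₀.tail)
    have hz : (S₀.zip S₀.tail).length = n - 1 := by
      rw [List.length_zip, List.length_tail, hlen]
      omega
    rw [hz] at hc
    exact hc
  set m := n - 1 - d with hmm
  have hm : n - d - 1 = m := by omega
  have hdm : d + m = n - 1 := by omega
  have hdmR : (d : ℝ) + (m : ℝ) = (n : ℝ) - 1 := by
    have : ((d + m : ℕ) : ℝ) = ((n - 1 : ℕ) : ℝ) := by rw [hdm]
    push_cast [Nat.cast_sub hn] at this ⊢
    linarith
  -- bound on d
  have hdR : (d : ℝ) ≤ (1/4 + δ) * n + 1 := by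
    have hle : (d : ℝ) ≤ (⌈((1 / 4 : ℝ) + δ) * n⌉₊ : ℝ) := by exact_mod_cast hd
    have hlt : (⌈((1 / 4 : ℝ) + δ) * n⌉₊ : ℝ) < (1/4 + δ) * n + 1 :=
      Nat.ceil_lt_add_one (by positivity)
    linarith
  unfold Dpn
  rw [← hdd, hm]
  have hA : ((1 - (1/4 + δ)) / 3 : ℝ) = (1/4) * (1 - 4*δ/3) := by ring
  have hB : ((1/4 : ℝ) + δ) = (1/4) * (1 + 4*δ) := by ring
  have hC : ((1 - (1/4 : ℝ)) / 3) = 1/4 := by norm_num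
  rw [hA, hB, hC, mul_pow, mul_pow]
  -- reduce to scalar inequality
  have key : (1/2 : ℝ) * Real.exp (-8 * δ^2 * n) * ((1 - 4*δ/3)^m * (1 + 4*δ)^d) ≤ 1 := by
    have hb1 : (0:ℝ) ≤ 1 - 4*δ/3 := by linarith
    have hb2 : (0:ℝ) ≤ 1 + 4*δ := by linarith
    have e1 : (1 - 4*δ/3 : ℝ) ^ m ≤ Real.exp (-(4*δ/3)) ^ m := by
      apply pow_le_pow_left₀ hb1
      have := Real.add_one_le_exp (-(4*δ/3))
      linarith
    have e2 : (1 + 4*δ : ℝ) ^ d ≤ Real.exp (4*δ) ^ d := by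
      apply pow_le_pow_left₀ hb2
      have := Real.add_one_le_exp (4*δ)
      linarith
    have e1' : Real.exp (-(4*δ/3)) ^ m = Real.exp ((m:ℝ) * (-(4*δ/3))) :=
      (Real.exp_nat_mul _ m).symm
    have e2' : Real.exp (4*δ) ^ d = Real.exp ((d:ℝ) * (4*δ)) :=
      (Real.exp_nat_mul _ d).symm
    have hprod : (1 - 4*δ/3)^m * (1 + 4*δ)^d
        ≤ Real.exp ((m:ℝ) * (-(4*δ/3)) + (d:ℝ) * (4*δ)) := by
      rw [Real.exp_add, ← e1', ← e2']
      exact mul_le_mul e1 e2 (pow_nonneg hb2 d) (pow_nonneg (Real.exp_pos _).le m)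
    have hexp : -8 * δ^2 * n + ((m:ℝ) * (-(4*δ/3)) + (d:ℝ) * (4*δ)) ≤ 2/3 := by
      have hmR : (m : ℝ) = (n : ℝ) - 1 - d := by linarith
      have hn1 : (1:ℝ) ≤ n := by exact_mod_cast hn
      nlinarith [mul_nonneg h0 (sub_nonneg.mpr hdR), sq_nonneg δ,
        mul_nonneg (mul_nonneg h0 h0) (sub_nonneg.mpr hn1)]
    calc (1/2 : ℝ) * Real.exp (-8 * δ^2 * n) * ((1 - 4*δ/3)^m * (1 + 4*δ)^d)
        ≤ (1/2) * Real.exp (-8 * δ^2 * n) *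
            Real.exp ((m:ℝ) * (-(4*δ/3)) + (d:ℝ) * (4*δ)) := by
          apply mul_le_mul_of_nonneg_left hprod
          positivity
      _ = (1/2) * Real.exp (-8 * δ^2 * n + ((m:ℝ) * (-(4*δ/3)) + (d:ℝ) * (4*δ))) := by
          simp only [Real.exp_add]; ring
      _ ≤ (1/2) * Real.exp (2/3) := by
          have := Real.exp_le_exp.mpr hexp
          linarith
      _ ≤ 1 := by
          have := exp_two_thirds_le_two
          linarith
  have hP : (0:ℝ) ≤ (1/4) * (1/4:ℝ)^m * (1/4:ℝ)^d := by positivity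
  have expand : (1/2 : ℝ) * Real.exp (-8 * δ^2 * n) *
      ((1/4) * ((1/4:ℝ)^m * (1 - 4*δ/3)^m) * ((1/4:ℝ)^d * (1 + 4*δ)^d))
      = ((1/2) * Real.exp (-8 * δ^2 * n) * ((1 - 4*δ/3)^m * (1 + 4*δ)^d)) *
        ((1/4) * (1/4:ℝ)^m * (1/4:ℝ)^d) := by ring
  calc (1/2 : ℝ) * Real.exp (-8 * δ^2 * n) *
      ((1/4) * ((1/4:ℝ)^m * (1 - 4*δ/3)^m) * ((1/4:ℝ)^d * (1 + 4*δ)^d))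
      = ((1/2) * Real.exp (-8 * δ^2 * n) * ((1 - 4*δ/3)^m * (1 + 4*δ)^d)) *
        ((1/4) * (1/4:ℝ)^m * (1/4:ℝ)^d) := expand
    _ ≤ 1 * ((1/4) * (1/4:ℝ)^m * (1/4:ℝ)^d) := mul_le_mul_of_nonneg_right key hP
    _ = (1/4) * (1/4:ℝ)^m * (1/4:ℝ)^d := by ring
end
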